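/- arXiv:1702.04698 — 3 statements merged into one kernel-verified Lean document; each statement's English description precedes it below -/
import Mathlib

section
/- Let μ be a probability measure on ℝⁿ such that |x−y|≤D for all x,y in the support of μ, and define θ_D(x)=|x|²/(4D²) for |x|≤D and θ_D(x)=+∞ for |x|>D. Then for every convex function φ:ℝⁿ→ℝ bounded from below, ∫_{ℝⁿ} e^{Q₁^{θ_D} φ} dμ · ∫_{ℝⁿ} e^{−φ} dμ ≤ 1, where Q₁^{θ_D} φ(x)=inf{φ(y)+θ_D(x−y) : y∈ℝⁿ}. -/
/-!
By Tonelli it suffices to show `e^{Qφ(x) - φ(y)} + e^{Qφ(y) - φ(x)} ≤ 2` for `x, y` in the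
support: integrating it in both variables gives twice the product of the two integrals.
Say `φ(y) ≤ φ(x)` and put `h = φ(x) - φ(y)`. Testing the infimum at `tx + (1 - t)y`, where the
cost is at most `(1 - t)²/4` because `‖x - y‖ ≤ D`, convexity gives
`Qφ(x) - φ(y) ≤ th + (1 - t)²/4` for all `t ∈ [0, 1]`, while `Qφ(y) - φ(x) ≤ -h`. Optimising in
`t` leaves the scalar inequalities `e^{h - h²} + e^{-h} ≤ 2` for `h ≤ 1/2` and
`e^{1/4} + e^{-h} ≤ 2` for `h ≥ 1/2`.
-/

open MeasureTheory ProbabilityTheory Real Set Filter Topology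
open scoped ENNReal NNReal

/-- The support of a measure: the set of points all of whose open neighbourhoods have
positive measure. -/
def msupport {E : Type*} [TopologicalSpace E] [MeasurableSpace E] (μ : Measure E) : Set E :=
  {x | ∀ U : Set E, IsOpen U → x ∈ U → 0 < μ U}

/-- The infimum convolution `Q₁^{θ_D} φ(x) = inf_y {φ(y) + θ_D(x−y)}` where
`θ_D(z) = |z|²/(4D²)` for `|z| ≤ D` and `θ_D(z) = +∞` for `|z| > D`; since `θ_D` is infinite
outside the ball of radius `D`, the infimum is effectively restricted to `‖x − y‖ ≤ D`. -/
noncomputable def QD {E : Type*} [NormedAddCommGroup E] (D : ℝ) (φ : E → ℝ) (x : E) : ℝ :=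
  ⨅ y : {y : E // ‖x - y‖ ≤ D}, (φ (y : E) + ‖x - (y : E)‖ ^ 2 / (4 * D ^ 2))

theorem msupport_eq_support {E : Type*} [TopologicalSpace E] [MeasurableSpace E]
    (μ : Measure E) : msupport μ = μ.support := by
  ext x
  simp only [msupport, Measure.support_eq_forall_isOpen, mem_ofPred_eq]
  exact forall_congr' fun U => imp.swap

theorem ae_mem_msupport {E : Type*} [TopologicalSpace E] [HereditarilyLindelofSpace E]
    [MeasurableSpace E] (μ : Measure E) : ∀ᵐ x ∂μ, x ∈ msupport μ := by
  rw [msupport_eq_support]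
  exact Measure.support_mem_ae

theorem lintegral_mul_lintegral_le_one_of_forall_mem {X : Type*} [MeasurableSpace X]
    {μ : Measure X} [IsProbabilityMeasure μ] {S : Set X} (hS : ∀ᵐ x ∂μ, x ∈ S)
    {f g : X → ℝ≥0∞} (hfg : ∀ x ∈ S, ∀ y ∈ S, f x * g y + f y * g x ≤ 2) :
    (∫⁻ x, f x ∂μ) * (∫⁻ x, g x ∂μ) ≤ 1 := by
  -- the lower integral is attained by a measurable minorant, so Tonelli applies
  obtain ⟨f', hf'm, hf'f, hf'eq⟩ := exists_measurable_le_lintegral_eq μ f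
  obtain ⟨g', hg'm, hg'g, hg'eq⟩ := exists_measurable_le_lintegral_eq μ g
  have hfg' : ∀ᵐ x ∂μ, ∀ᵐ y ∂μ, f' x * g' y + f' y * g' x ≤ 2 := by
    filter_upwards [hS] with x hx
    filter_upwards [hS] with y hy
    exact (add_le_add (mul_le_mul' (hf'f x) (hg'g y)) (mul_le_mul' (hf'f y) (hg'g x))).trans
      (hfg x hx y hy)
  have hdouble : 2 * ((∫⁻ x, f x ∂μ) * (∫⁻ x, g x ∂μ)) ≤ 2 * 1 :=
    calc 2 * ((∫⁻ x, f x ∂μ) * (∫⁻ x, g x ∂μ))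
        = ∫⁻ x, ∫⁻ y, (f' x * g' y + f' y * g' x) ∂μ ∂μ := by
          have hinner : ∀ x, ∫⁻ y, (f' x * g' y + f' y * g' x) ∂μ
              = f' x * ∫⁻ y, g' y ∂μ + (∫⁻ y, f' y ∂μ) * g' x := fun x => by
            rw [lintegral_add_left (hg'm.const_mul _), lintegral_const_mul _ hg'm,
              lintegral_mul_const _ hf'm]
          simp_rw [hinner]
          rw [lintegral_add_left (hf'm.mul_const _), lintegral_mul_const _ hf'm,
            lintegral_const_mul _ hg'm, hf'eq, hg'eq]
          ring
      _ ≤ ∫⁻ _, ∫⁻ _, 2 ∂μ ∂μ :=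
          lintegral_mono_ae (hfg'.mono fun x hx => lintegral_mono_ae hx)
      _ = 2 * 1 := by simp
  exact (ENNReal.mul_le_mul_iff_right two_ne_zero ENNReal.ofNat_ne_top).1 hdouble

theorem exp_le_cubic_of_abs_le_one {u : ℝ} (hu : |u| ≤ 1) :
    exp u ≤ 1 + u + u ^ 2 / 2 + 2 / 9 * |u| ^ 3 := by
  have h := (abs_sub_le_iff.1 (exp_bound hu (n := 3) (by norm_num))).1
  norm_num [Finset.sum_range_succ, Nat.factorial] at h
  linarith

theorem exp_sub_sq_add_exp_neg_le_two {h : ℝ} (h0 : 0 ≤ h) (h1 : h ≤ 1 / 2) :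
    exp (h - h ^ 2) + exp (-h) ≤ 2 := by
  have hu : 0 ≤ h - h ^ 2 := by nlinarith
  have e1 := exp_le_cubic_of_abs_le_one (u := h - h ^ 2) (by rw [abs_of_nonneg hu]; nlinarith)
  have e2 := exp_le_cubic_of_abs_le_one (u := -h) (by rw [abs_neg, abs_of_nonneg h0]; linarith)
  rw [abs_of_nonneg hu] at e1
  rw [abs_neg, abs_of_nonneg h0] at e2
  nlinarith [pow_nonneg h0 3, pow_nonneg h0 4,
    sq_nonneg (h * (1 - h))]

theorem exp_quarter_add_exp_neg_le_two {h : ℝ} (h1 : 1 / 2 ≤ h) :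
    exp (1 / 4) + exp (-h) ≤ 2 := by
  have e1 : exp (1 / 4) ≤ 4 / 3 := by
    have := exp_bound_div_one_sub_of_interval' (x := 1 / 4) (by norm_num) (by norm_num)
    norm_num at this
    exact this.le
  have e2 : exp (-h) ≤ 2 / 3 := by
    have : 3 / 2 ≤ exp (1 / 2) := by linarith [add_one_le_exp (1 / 2 : ℝ)]
    calc exp (-h) ≤ exp (-(1 / 2)) := exp_le_exp.2 (by linarith)
      _ = (exp (1 / 2))⁻¹ := exp_neg _
      _ ≤ 2 / 3 := by rw [inv_le_comm₀ (exp_pos _) (by norm_num)]; linarith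
  linarith

theorem exp_add_exp_le_two {h A B : ℝ} (h0 : 0 ≤ h)
    (hA : ∀ t : ℝ, 0 ≤ t → t ≤ 1 → A ≤ t * h + (1 - t) ^ 2 / 4) (hB : B ≤ -h) :
    exp A + exp B ≤ 2 := by
  rcases le_or_gt h (1 / 2) with hsmall | hlarge
  · -- the choice `t = 1 - 2h` minimises the bound on `A`
    have hA' : A ≤ h - h ^ 2 := by nlinarith [hA (1 - 2 * h) (by linarith) (by linarith)]
    calc exp A + exp B ≤ exp (h - h ^ 2) + exp (-h) := by gcongr
      _ ≤ 2 := exp_sub_sq_add_exp_neg_le_two h0 hsmall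
  · have hA' : A ≤ 1 / 4 := by nlinarith [hA 0 le_rfl zero_le_one]
    calc exp A + exp B ≤ exp (1 / 4) + exp (-h) := by gcongr
      _ ≤ 2 := exp_quarter_add_exp_neg_le_two hlarge.le

section InfConvolution

variable {E : Type*} [NormedAddCommGroup E] {D : ℝ} {φ : E → ℝ}

theorem QD_le (hφ : BddBelow (range φ)) {x z : E} (hxz : ‖x - z‖ ≤ D) :
    QD D φ x ≤ φ z + ‖x - z‖ ^ 2 / (4 * D ^ 2) := by
  obtain ⟨c, hc⟩ := hφ
  refine ciInf_le ⟨c, ?_⟩ (⟨z, hxz⟩ : {z : E // ‖x - z‖ ≤ D})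
  rintro _ ⟨w, rfl⟩
  have hcost : 0 ≤ ‖x - (w : E)‖ ^ 2 / (4 * D ^ 2) := by positivity
  linarith [hc (mem_range_self (w : E))]

variable [NormedSpace ℝ E]

theorem QD_le_convex_comb (hconv : ConvexOn ℝ univ φ) (hφ : BddBelow (range φ)) {x y : E}
    (hxy : ‖x - y‖ ≤ D) {t : ℝ} (ht0 : 0 ≤ t) (ht1 : t ≤ 1) :
    QD D φ x ≤ t * φ x + (1 - t) * φ y + (1 - t) ^ 2 / 4 := by
  have hxz : ‖x - (t • x + (1 - t) • y)‖ = (1 - t) * ‖x - y‖ := by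
    rw [show x - (t • x + (1 - t) • y) = (1 - t) • (x - y) by module, norm_smul,
      Real.norm_of_nonneg (by linarith)]
  have hcost : ‖x - (t • x + (1 - t) • y)‖ ^ 2 / (4 * D ^ 2) ≤ (1 - t) ^ 2 / 4 := by
    have hratio : ‖x - y‖ ^ 2 / D ^ 2 ≤ 1 :=
      div_le_one_of_le₀ (pow_le_pow_left₀ (norm_nonneg _) hxy 2) (sq_nonneg D)
    calc ‖x - (t • x + (1 - t) • y)‖ ^ 2 / (4 * D ^ 2)
        = (1 - t) ^ 2 / 4 * (‖x - y‖ ^ 2 / D ^ 2) := by rw [hxz]; ring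
      _ ≤ (1 - t) ^ 2 / 4 := mul_le_of_le_one_right (by positivity) hratio
  have hmid := hconv.2 (mem_univ x) (mem_univ y) ht0 (sub_nonneg.2 ht1) (add_sub_cancel t 1)
  have hQ := QD_le hφ (hxz.trans_le (mul_le_of_le_one_left (norm_nonneg _) (by linarith)
    |>.trans hxy))
  simp only [smul_eq_mul] at hmid
  linarith

theorem exp_QD_sub_add_exp_QD_sub_le_two (hconv : ConvexOn ℝ univ φ)
    (hφ : BddBelow (range φ)) {x y : E} (hxy : ‖x - y‖ ≤ D) :
    exp (QD D φ x - φ y) + exp (QD D φ y - φ x) ≤ 2 := by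
  wlog hle : φ y ≤ φ x generalizing x y
  · rw [add_comm]
    exact this (norm_sub_rev x y ▸ hxy) (le_of_not_ge hle)
  refine exp_add_exp_le_two (sub_nonneg.2 hle) (fun t ht0 ht1 => ?_) ?_
  · linarith [QD_le_convex_comb hconv hφ hxy ht0 ht1]
  · linarith [QD_le_convex_comb hconv hφ (norm_sub_rev x y ▸ hxy) zero_le_one le_rfl]

end InfConvolution

theorem inf_convolution_of_bounded_support_general
    (n : ℕ) (μ : Measure (EuclideanSpace ℝ (Fin n))) [IsProbabilityMeasure μ]
    (D : ℝ)
    (hsupp : ∀ x ∈ msupport μ, ∀ y ∈ msupport μ, ‖x - y‖ ≤ D)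
    (φ : EuclideanSpace ℝ (Fin n) → ℝ) (hconv : ConvexOn ℝ Set.univ φ)
    (hbdd : BddBelow (Set.range φ)) :
    (∫⁻ x, ENNReal.ofReal (Real.exp (QD D φ x)) ∂μ) *
      (∫⁻ x, ENNReal.ofReal (Real.exp (-φ x)) ∂μ) ≤ 1 := by
  refine lintegral_mul_lintegral_le_one_of_forall_mem (ae_mem_msupport μ) fun x hx y hy => ?_
  have hxy := exp_QD_sub_add_exp_QD_sub_le_two hconv hbdd (hsupp x hx y hy)
  rw [← ENNReal.ofReal_mul (exp_nonneg _), ← ENNReal.ofReal_mul (exp_nonneg _), ← exp_add,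
    ← exp_add, ← ENNReal.ofReal_add (exp_nonneg _) (exp_nonneg _)]
  simpa only [← sub_eq_add_neg, ENNReal.ofReal_ofNat] using ENNReal.ofReal_le_ofReal hxy

/-- **Lemma 3.3, first part (after Maurey).** If the support of `μ` has diameter at most `D`,
then `μ` satisfies the convex infimum convolution inequality with cost
`θ_D(z) = |z|²/(4D²)` for `|z| ≤ D`, `+∞` otherwise. -/
theorem inf_convolution_of_bounded_support
    (n : ℕ) (μ : Measure (EuclideanSpace ℝ (Fin n))) [IsProbabilityMeasure μ]
    (D : ℝ) (hD : 0 < D)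
    (hsupp : ∀ x ∈ msupport μ, ∀ y ∈ msupport μ, ‖x - y‖ ≤ D)
    (φ : EuclideanSpace ℝ (Fin n) → ℝ) (hconv : ConvexOn ℝ Set.univ φ)
    (hbdd : BddBelow (Set.range φ)) :
    (∫⁻ x, ENNReal.ofReal (Real.exp (QD D φ x)) ∂μ) *
      (∫⁻ x, ENNReal.ofReal (Real.exp (-φ x)) ∂μ) ≤ 1 :=
  inf_convolution_of_bounded_support_general n μ D hsupp φ hconv hbdd
end

section
/- Let μ be a probability measure on ℝⁿ, let D>0, and define θ_D(x)=|x|²/(4D²) for |x|≤D and θ_D(x)=+∞ for |x|>D. If ∫_{ℝⁿ} e^{Q₁^{θ_D} φ} dμ · ∫_{ℝⁿ} e^{−φ} dμ ≤ 1 holds for every convex function φ:ℝⁿ→ℝ bounded from below, where Q₁^{θ_D} φ(x)=inf{φ(y)+θ_D(x−y) : y∈ℝⁿ}, then the support of μ is bounded and |x−y|≤D for all x,y in the support of μ. -/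
open MeasureTheory ProbabilityTheory Real Set Filter Topology
open scoped ENNReal NNReal

/-!
If two points `x₀, y₀` of the support were at distance `L > D`, test the inequality on
`φ = t · max (ℓ - ℓ y₀ - ε) 0`, where `ℓ` is a norming functional of `x₀ - y₀` and
`ε = (L - D) / 4`. Then `φ` vanishes on the `ε`-ball around `y₀`, while every point within
distance `D` of the `ε`-ball around `x₀` has `φ ≥ 2tε`, so `Q₁^{θ_D} φ ≥ 2tε` on that ball.
Hence `e^{2tε} μ(B(x₀, ε)) μ(B(y₀, ε)) ≤ 1` for every `t ≥ 0`, which forces one of the two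
balls to be null, although their centres lie in the support.
-/

theorem le_QD {E : Type*} [NormedAddCommGroup E] {D b : ℝ} {φ : E → ℝ} {x : E} (hD : 0 ≤ D)
    (h : ∀ y, ‖x - y‖ ≤ D → b ≤ φ y) : b ≤ QD D φ x := by
  have : Nonempty {y : E // ‖x - y‖ ≤ D} := ⟨⟨x, by simpa using hD⟩⟩
  exact le_ciInf fun y => (h y y.2).trans (le_add_of_nonneg_right (by positivity))

theorem ENNReal.eq_zero_of_forall_ofReal_exp_mul_le_one {m : ℝ≥0∞} {c : ℝ} (hc : 0 < c)
    (h : ∀ t : ℝ, 0 ≤ t → ENNReal.ofReal (exp (t * c)) * m ≤ 1) : m = 0 := by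
  by_contra hm
  obtain ⟨k, hk⟩ := ENNReal.exists_nat_mul_gt hm ENNReal.one_ne_top
  have hexp : (k : ℝ≥0∞) ≤ ENNReal.ofReal (exp (k / c * c)) := by
    rw [div_mul_cancel₀ _ hc.ne', ← ENNReal.ofReal_natCast]
    exact ENNReal.ofReal_le_ofReal ((le_add_of_nonneg_right zero_le_one).trans (add_one_le_exp _))
  exact (hk.trans_le ((mul_le_mul_left hexp m).trans (h _ (by positivity)))).false

theorem ofReal_exp_mul_measure_mul_measure_le_one {E : Type*} [NormedAddCommGroup E]
    [Module ℝ E] [MeasurableSpace E] (μ : Measure E) {D : ℝ} (hD : 0 ≤ D)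
    (hIC : ∀ φ : E → ℝ, ConvexOn ℝ univ φ → BddBelow (range φ) →
      (∫⁻ x, ENNReal.ofReal (exp (QD D φ x)) ∂μ) *
        (∫⁻ x, ENNReal.ofReal (exp (-φ x)) ∂μ) ≤ 1)
    {ψ : E → ℝ} (hψ : ConvexOn ℝ univ ψ) (hψ_bdd : BddBelow (range ψ))
    {U V : Set E} (hU : MeasurableSet U) (hV : MeasurableSet V) {c : ℝ}
    (hψU : ∀ x ∈ U, ∀ y, ‖x - y‖ ≤ D → c ≤ ψ y) (hψV : ∀ x ∈ V, ψ x = 0)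
    {t : ℝ} (ht : 0 ≤ t) :
    ENNReal.ofReal (exp (t * c)) * (μ U * μ V) ≤ 1 := by
  set φ : E → ℝ := fun x => t * ψ x
  have hφ_bdd : BddBelow (range φ) := by
    simpa only [φ, range_comp'] using (monotone_mul_left_of_nonneg ht).map_bddBelow hψ_bdd
  have hQD : ∀ x ∈ U, ENNReal.ofReal (exp (t * c)) ≤ ENNReal.ofReal (exp (QD D φ x)) :=
    fun x hx => ENNReal.ofReal_le_ofReal <| exp_le_exp.2 <|
      le_QD hD fun y hy => mul_le_mul_of_nonneg_left (hψU x hx y hy) ht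
  have hφV : ∀ x ∈ V, (1 : ℝ≥0∞) ≤ ENNReal.ofReal (exp (-φ x)) := fun x hx => by
    simp [φ, hψV x hx]
  calc ENNReal.ofReal (exp (t * c)) * (μ U * μ V)
      = (∫⁻ _ in U, ENNReal.ofReal (exp (t * c)) ∂μ) * ∫⁻ _ in V, 1 ∂μ := by
        rw [setLIntegral_const, setLIntegral_const, one_mul, mul_assoc]
    _ ≤ (∫⁻ x, ENNReal.ofReal (exp (QD D φ x)) ∂μ) * ∫⁻ x, ENNReal.ofReal (exp (-φ x)) ∂μ := by
        refine mul_le_mul' ?_ ?_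
        · exact (setLIntegral_mono' hU hQD).trans (setLIntegral_le_lintegral _ _)
        · exact (setLIntegral_mono' hV hφV).trans (setLIntegral_le_lintegral _ _)
    _ ≤ 1 := hIC φ (hψ.smul ht) hφ_bdd

theorem norm_sub_le_of_mem_msupport {E : Type*} [NormedAddCommGroup E] [NormedSpace ℝ E]
    [MeasurableSpace E] [OpensMeasurableSpace E] (μ : Measure E) {D : ℝ} (hD : 0 ≤ D)
    (hIC : ∀ φ : E → ℝ, ConvexOn ℝ univ φ → BddBelow (range φ) →
      (∫⁻ x, ENNReal.ofReal (exp (QD D φ x)) ∂μ) *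
        (∫⁻ x, ENNReal.ofReal (exp (-φ x)) ∂μ) ≤ 1)
    {x₀ y₀ : E} (hx₀ : x₀ ∈ msupport μ) (hy₀ : y₀ ∈ msupport μ) : ‖x₀ - y₀‖ ≤ D := by
  by_contra! hfar
  obtain ⟨ℓ, hℓ, hℓx⟩ := exists_dual_vector ℝ (x₀ - y₀) (hD.trans_lt hfar).ne'
  replace hℓx : ℓ x₀ - ℓ y₀ = ‖x₀ - y₀‖ := by simpa using hℓx
  have hℓ_le : ∀ z, ℓ z ≤ ‖z‖ := fun z => by
    simpa [hℓ] using (le_abs_self _).trans (ℓ.le_opNorm z)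
  set ε := (‖x₀ - y₀‖ - D) / 4 with hε_def
  have hε : 0 < ε := by positivity
  set ψ : E → ℝ := fun x => max (ℓ x + -(ℓ y₀ + ε)) 0
  have hψ : ConvexOn ℝ univ ψ :=
    (((ℓ : E →ₗ[ℝ] ℝ).convexOn convex_univ).add_const (-(ℓ y₀ + ε))).sup
      (convexOn_const 0 convex_univ)
  have hψ_bdd : BddBelow (range ψ) := ⟨0, by rintro _ ⟨x, rfl⟩; exact le_max_right _ _⟩
  have hψV : ∀ x ∈ Metric.ball y₀ ε, ψ x = 0 := fun x hx => by
    have := hℓ_le (x - y₀)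
    rw [Metric.mem_ball, dist_eq_norm] at hx
    rw [map_sub] at this
    exact max_eq_right (by linarith)
  have hψU : ∀ x ∈ Metric.ball x₀ ε, ∀ y, ‖x - y‖ ≤ D → 2 * ε ≤ ψ y := fun x hx y hy => by
    have h₁ := hℓ_le (x₀ - x)
    have h₂ := hℓ_le (x - y)
    rw [Metric.mem_ball, dist_eq_norm'] at hx
    rw [map_sub] at h₁ h₂
    exact le_max_of_le_left (by linarith)
  exact mul_ne_zero (hx₀ _ Metric.isOpen_ball (Metric.mem_ball_self hε)).ne'
    (hy₀ _ Metric.isOpen_ball (Metric.mem_ball_self hε)).ne'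
    (ENNReal.eq_zero_of_forall_ofReal_exp_mul_le_one (by positivity) fun t ht =>
      ofReal_exp_mul_measure_mul_measure_le_one μ hD hIC hψ hψ_bdd measurableSet_ball
        measurableSet_ball hψU hψV ht)

theorem bounded_support_of_inf_convolution_general
    (n : ℕ) (μ : Measure (EuclideanSpace ℝ (Fin n)))
    (D : ℝ) (hD : 0 < D)
    (hIC : ∀ φ : EuclideanSpace ℝ (Fin n) → ℝ, ConvexOn ℝ Set.univ φ →
      BddBelow (Set.range φ) →
      (∫⁻ x, ENNReal.ofReal (Real.exp (QD D φ x)) ∂μ) *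
        (∫⁻ x, ENNReal.ofReal (Real.exp (-φ x)) ∂μ) ≤ 1) :
    Bornology.IsBounded (msupport μ) ∧
      ∀ x ∈ msupport μ, ∀ y ∈ msupport μ, ‖x - y‖ ≤ D := by
  have hdiam : ∀ x ∈ msupport μ, ∀ y ∈ msupport μ, ‖x - y‖ ≤ D :=
    fun x hx y hy => norm_sub_le_of_mem_msupport μ hD.le hIC hx hy
  refine ⟨Metric.isBounded_iff.2 ⟨D, fun x hx y hy => ?_⟩, hdiam⟩
  exact (dist_eq_norm x y).trans_le (hdiam x hx y hy)

/-- **Lemma 3.3, second part.** Conversely, if the convex infimum convolution inequality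
with cost `θ_D` holds for every convex function bounded from below, then the support of `μ`
is bounded and has diameter at most `D`. -/
theorem bounded_support_of_inf_convolution
    (n : ℕ) (μ : Measure (EuclideanSpace ℝ (Fin n))) [IsProbabilityMeasure μ]
    (D : ℝ) (hD : 0 < D)
    (hIC : ∀ φ : EuclideanSpace ℝ (Fin n) → ℝ, ConvexOn ℝ Set.univ φ →
      BddBelow (Set.range φ) →
      (∫⁻ x, ENNReal.ofReal (Real.exp (QD D φ x)) ∂μ) *
        (∫⁻ x, ENNReal.ofReal (Real.exp (-φ x)) ∂μ) ≤ 1) :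
    Bornology.IsBounded (msupport μ) ∧
      ∀ x ∈ msupport μ, ∀ y ∈ msupport μ, ‖x - y‖ ≤ D :=
  bounded_support_of_inf_convolution_general n μ D hD hIC
end

section
/- Let μ be a symmetric probability measure on ℝ with a nowhere vanishing density, and let θ:[0,∞)→[0,∞) be convex with θ(t)=t² on [0,t₀]. Then for all x,h ≥ 0 one has μ([U_μ(x+h),∞)) = e^{−h}·μ([U_μ(x),∞)). Consequently, if there exists b>0 such that Δ_μ(h) ≤ (1/b)·θ^{-1}(t₀²+h) for all h>0, then, with g(h):=(1/b)·θ^{-1}(t₀²+h), one has μ([x+g(h),∞)) ≤ e^{−h}·μ([x,∞)) for all x ≥ 0 and h > 0. -/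
open MeasureTheory ProbabilityTheory Real Set Filter Topology
open scoped ENNReal NNReal

/-- The generalized inverse `F_μ^{-1}(t) = inf {y : F_μ(y) ≥ t}` of the cumulative
distribution function `F_μ(y) = μ((-∞, y])`. -/
noncomputable def invCDF (μ : Measure ℝ) (t : ℝ) : ℝ :=
  sInf {y : ℝ | t ≤ (μ (Iic y)).toReal}

/-- The cumulative distribution function of the symmetric exponential measure `τ`
with density `(1/2) e^{-|x|}`. -/
noncomputable def expCDF (x : ℝ) : ℝ :=
  if x < 0 then Real.exp x / 2 else 1 - Real.exp (-x) / 2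

/-- `U_μ = F_μ^{-1} ∘ F_τ`, the unique left-continuous non-decreasing map
transporting `τ` onto `μ`. -/
noncomputable def Umap (μ : Measure ℝ) (x : ℝ) : ℝ :=
  invCDF μ (expCDF x)

open scoped Classical in
/-- `Ent_μ(g) = ∫ g ln g dμ − (∫ g dμ) ln (∫ g dμ)` if `∫ g ln g dμ < ∞`, and `+∞`
otherwise (for nonnegative `g` this quantity is nonnegative, so it is recorded in `ℝ≥0∞`). -/
noncomputable def Ent (μ : Measure ℝ) (g : ℝ → ℝ) : ℝ≥0∞ :=
  if Integrable (fun x => g x * Real.log (g x)) μ then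
    ENNReal.ofReal ((∫ x, g x * Real.log (g x) ∂μ) -
      (∫ x, g x ∂μ) * Real.log (∫ x, g x ∂μ))
  else ⊤

open scoped Classical in
/-- The relative entropy `H(ν|μ) = ∫ log (dν/dμ) dν`, `+∞` if `ν` is not absolutely
continuous w.r.t. `μ` (for probability measures it is nonnegative, hence valued in `ℝ≥0∞`). -/
noncomputable def relEnt {α : Type*} [MeasurableSpace α] (ν μ : Measure α) : ℝ≥0∞ :=
  if ν ≪ μ ∧ Integrable (fun x => Real.log ((ν.rnDeriv μ x).toReal)) ν then
    ENNReal.ofReal (∫ x, Real.log ((ν.rnDeriv μ x).toReal) ∂ν)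
  else ⊤

/-- The weak (barycentric) transport cost
`T̄_θ(μ₂|μ₁) = inf_π ∫ θ(|x − ∫ y p(x,dy)|) μ₁(dx)`, the infimum running over all
couplings `π(dxdy) = p(x,dy) μ₁(dx)` of `μ₁` and `μ₂` (described by their
disintegration kernels `p`). -/
noncomputable def weakCost (θ : ℝ → ℝ) (μ₂ μ₁ : Measure ℝ) : ℝ≥0∞ :=
  ⨅ (p : Kernel ℝ ℝ) (_ : IsMarkovKernel p) (_ : μ₁.bind (fun x => p x) = μ₂),
    ∫⁻ x, ENNReal.ofReal (θ |x - ∫ y, y ∂(p x)|) ∂μ₁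

/-- `μ` satisfies `T̄⁻(θ)`: `T̄_θ(μ|ν) ≤ H(ν|μ)` for every probability measure `ν`
with finite first moment. -/
def Tminus (θ : ℝ → ℝ) (μ : Measure ℝ) : Prop :=
  ∀ ν : Measure ℝ, IsProbabilityMeasure ν → Integrable (fun x => x) ν →
    weakCost θ μ ν ≤ relEnt ν μ

/-- `μ` satisfies `T̄⁺(θ)`: `T̄_θ(ν|μ) ≤ H(ν|μ)` for every probability measure `ν`
with finite first moment. -/
def Tplus (θ : ℝ → ℝ) (μ : Measure ℝ) : Prop :=
  ∀ ν : Measure ℝ, IsProbabilityMeasure ν → Integrable (fun x => x) ν →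
    weakCost θ ν μ ≤ relEnt ν μ

/-- The inverse of an increasing cost function `θ` on `[0,∞)`:
`θ⁻¹(u) = inf {t ≥ 0 : θ(t) ≥ u}`. -/
noncomputable def cinv (θ : ℝ → ℝ) (u : ℝ) : ℝ :=
  sInf {t : ℝ | 0 ≤ t ∧ u ≤ θ t}


/-!
A positive density makes the distribution function `F` of `μ` a continuous increasing bijection
of `ℝ` onto `(0, 1)`, so `U_μ = F⁻¹ ∘ F_τ` and, for `x ≥ 0`,
`μ([U_μ(x), ∞)) = 1 - F_τ(x) = e^{-x}/2`; the first identity follows. By symmetry `F(0) = 1/2`,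
so every `x ≥ 0` equals `U_μ(x')` for some `x' ≥ 0`. The bound on `Δ_μ` gives
`x + g(h) ≥ U_μ(x' + h)`, and the first identity turns this into the tail estimate.
-/

namespace ProbabilityTheory

variable {μ : Measure ℝ} [IsProbabilityMeasure μ]

lemma continuous_cdf [NullSingletonClass μ] : Continuous (cdf μ) := by
  refine continuous_iff_continuousAt.2 fun x => ?_
  have hmono := (cdf μ).mono
  refine continuousAt_iff_continuous_left'_right'.2
    ⟨hmono.continuousWithinAt_Iio_iff_leftLim_eq.2 ?_,
      ((cdf μ).right_continuous x).mono Ioi_subset_Ici_self⟩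
  have hjump : ENNReal.ofReal (cdf μ x - Function.leftLim (cdf μ) x) = 0 := by
    rw [← StieltjesFunction.measure_singleton, measure_cdf, measure_singleton]
  have := hmono.leftLim_le (le_refl x)
  rw [ENNReal.ofReal_eq_zero] at hjump
  linarith

lemma strictMono_cdf [μ.IsOpenPosMeasure] : StrictMono (cdf μ) := by
  intro a b hab
  have hpos : 0 < μ (Ioc a b) :=
    (isOpen_Ioo.measure_pos μ (nonempty_Ioo.2 hab)).trans_le (measure_mono Ioo_subset_Ioc_self)
  rw [← measure_cdf μ, StieltjesFunction.measure_Ioc, ENNReal.ofReal_pos] at hpos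
  linarith

lemma cdf_lt_one [μ.IsOpenPosMeasure] (x : ℝ) : cdf μ x < 1 :=
  (strictMono_cdf (lt_add_one x)).trans_le (cdf_le_one μ _)

lemma measure_Ici_eq_ofReal_one_sub_cdf [NullSingletonClass μ] (x : ℝ) :
    μ (Ici x) = ENNReal.ofReal (1 - cdf μ x) := by
  rw [← compl_Iio, prob_compl_eq_one_sub measurableSet_Iio, measure_congr Iio_ae_eq_Iic,
    cdf_eq_real, measureReal_def, ENNReal.ofReal_sub _ ENNReal.toReal_nonneg, ENNReal.ofReal_one,
    ENNReal.ofReal_toReal (measure_ne_top μ _)]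

lemma exists_cdf_eq [NullSingletonClass μ] {t : ℝ} (ht : t ∈ Ioo (0 : ℝ) 1) : ∃ y, cdf μ y = t :=
  mem_range_of_exists_le_of_exists_ge continuous_cdf
    ((tendsto_cdf_atBot μ).eventually (eventually_le_nhds ht.1)).exists
    ((tendsto_cdf_atTop μ).eventually (eventually_ge_nhds ht.2)).exists

lemma cdf_zero_of_isNegInvariant [NullSingletonClass μ] [μ.IsNegInvariant] : cdf μ 0 = 1 / 2 := by
  have hsymm : μ (Iic 0) = μ (Ici 0) := by
    rw [← Measure.measure_neg, neg_Iic, neg_zero]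
  have h := congrArg ENNReal.toReal hsymm
  rw [measure_Ici_eq_ofReal_one_sub_cdf, ENNReal.toReal_ofReal (by linarith [cdf_le_one μ 0]),
    ← measureReal_def, ← cdf_eq_real] at h
  linarith

end ProbabilityTheory

section Umap

variable {μ : Measure ℝ} [IsProbabilityMeasure μ]

lemma invCDF_eq_sInf (t : ℝ) : invCDF μ t = sInf {y | t ≤ cdf μ y} := by
  simp only [invCDF, cdf_eq_real, measureReal_def]

lemma invCDF_cdf [μ.IsOpenPosMeasure] (y : ℝ) : invCDF μ (cdf μ y) = y := by
  rw [invCDF_eq_sInf]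
  simp_rw [strictMono_cdf.le_iff_le]
  exact csInf_Ici

lemma cdf_invCDF [NullSingletonClass μ] [μ.IsOpenPosMeasure] {t : ℝ} (ht : t ∈ Ioo (0 : ℝ) 1) :
    cdf μ (invCDF μ t) = t := by
  obtain ⟨y, rfl⟩ := exists_cdf_eq (μ := μ) ht
  rw [invCDF_cdf]

lemma expCDF_of_nonneg {x : ℝ} (hx : 0 ≤ x) : expCDF x = 1 - exp (-x) / 2 :=
  if_neg hx.not_gt

lemma measure_Ici_Umap [NullSingletonClass μ] [μ.IsOpenPosMeasure] {x : ℝ} (hx : 0 ≤ x) :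
    μ (Ici (Umap μ x)) = ENNReal.ofReal (exp (-x) / 2) := by
  have hexp : exp (-x) ≤ 1 := exp_le_one_iff.2 (neg_nonpos.2 hx)
  have ht : expCDF x ∈ Ioo (0 : ℝ) 1 := by
    rw [expCDF_of_nonneg hx]; constructor <;> linarith [exp_pos (-x)]
  rw [Umap, measure_Ici_eq_ofReal_one_sub_cdf, cdf_invCDF ht, expCDF_of_nonneg hx, sub_sub_cancel]

lemma measure_Ici_Umap_add [NullSingletonClass μ] [μ.IsOpenPosMeasure] {x h : ℝ}
    (hx : 0 ≤ x) (hh : 0 ≤ h) :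
    μ (Ici (Umap μ (x + h))) = ENNReal.ofReal (exp (-h)) * μ (Ici (Umap μ x)) := by
  rw [measure_Ici_Umap (add_nonneg hx hh), measure_Ici_Umap hx, ← ENNReal.ofReal_mul (exp_nonneg _),
    neg_add, exp_add, mul_comm (exp (-x)), mul_div_assoc]

lemma exists_nonneg_Umap_eq [μ.IsOpenPosMeasure] (hmed : 1 / 2 ≤ cdf μ 0) {x : ℝ} (hx : 0 ≤ x) :
    ∃ x' ≥ 0, Umap μ x' = x := by
  have hF : 1 / 2 ≤ cdf μ x := hmed.trans (strictMono_cdf.monotone hx)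
  have hpos : 0 < 2 * (1 - cdf μ x) := by linarith [cdf_lt_one (μ := μ) x]
  have hx' : 0 ≤ -log (2 * (1 - cdf μ x)) := neg_nonneg.2 (log_nonpos hpos.le (by linarith))
  refine ⟨_, hx', ?_⟩
  rw [Umap, expCDF_of_nonneg hx', neg_neg, exp_log hpos,
    show 1 - 2 * (1 - cdf μ x) / 2 = cdf μ x by ring, invCDF_cdf]

lemma measure_Ici_add_le_of_Umap_sub_le [NullSingletonClass μ] [μ.IsOpenPosMeasure]
    (hmed : 1 / 2 ≤ cdf μ 0) {g h : ℝ} (hh : 0 ≤ h) (hg : ∀ x, Umap μ (x + h) - Umap μ x ≤ g)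
    {x : ℝ} (hx : 0 ≤ x) :
    μ (Ici (x + g)) ≤ ENNReal.ofReal (exp (-h)) * μ (Ici x) := by
  obtain ⟨x', hx', rfl⟩ := exists_nonneg_Umap_eq hmed hx
  calc μ (Ici (Umap μ x' + g))
      ≤ μ (Ici (Umap μ (x' + h))) := measure_mono (Ici_subset_Ici.2 (by linarith [hg x']))
    _ = ENNReal.ofReal (exp (-h)) * μ (Ici (Umap μ x')) := measure_Ici_Umap_add hx' hh

end Umap

lemma isOpenPosMeasure_withDensity {α : Type*} [TopologicalSpace α] [MeasurableSpace α]
    {μ : Measure α} [μ.IsOpenPosMeasure] {f : α → ℝ≥0∞} (hf : AEMeasurable f μ)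
    (hf0 : ∀ x, f x ≠ 0) : (μ.withDensity f).IsOpenPosMeasure :=
  (withDensity_absolutelyContinuous' hf (ae_of_all _ hf0)).isOpenPosMeasure

lemma isNegInvariant_withDensity {G : Type*} [InvolutiveNeg G] [MeasurableSpace G] [MeasurableNeg G]
    {μ : Measure G} [μ.IsNegInvariant] {f : G → ℝ≥0∞} (hf : ∀ x, f (-x) = f x) :
    (μ.withDensity f).IsNegInvariant := by
  refine ⟨Measure.ext fun s hs => ?_⟩
  rw [Measure.neg_def, Measure.map_apply measurable_neg hs, withDensity_apply _ (measurable_neg hs),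
    withDensity_apply _ hs, ← (Measure.measurePreserving_neg μ).setLIntegral_comp_preimage_emb
      (MeasurableEquiv.neg G).measurableEmbedding f s]
  simp only [hf]

theorem tail_condition_of_deltaCondition_general
    (θ : ℝ → ℝ) (t₀ : ℝ)
    (μ : Measure ℝ) [IsProbabilityMeasure μ]
    (ρ : ℝ → ℝ) (hρmeas : Measurable ρ) (hρpos : ∀ x, 0 < ρ x)
    (hρsymm : ∀ x, ρ (-x) = ρ x)
    (hμρ : μ = volume.withDensity fun x => ENNReal.ofReal (ρ x)) :
    (∀ x ≥ (0:ℝ), ∀ h ≥ (0:ℝ),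
      μ (Set.Ici (Umap μ (x + h))) =
        ENNReal.ofReal (Real.exp (-h)) * μ (Set.Ici (Umap μ x))) ∧
    (∀ b > (0:ℝ),
      (∀ h > (0:ℝ), ∀ x : ℝ,
        Umap μ (x + h) - Umap μ x ≤ (1 / b) * cinv θ (t₀ ^ 2 + h)) →
      ∀ x ≥ (0:ℝ), ∀ h > (0:ℝ),
        μ (Set.Ici (x + (1 / b) * cinv θ (t₀ ^ 2 + h))) ≤
          ENNReal.ofReal (Real.exp (-h)) * μ (Set.Ici x)) := by
  subst hμρ
  have : (volume.withDensity fun x => ENNReal.ofReal (ρ x)).IsOpenPosMeasure :=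
    isOpenPosMeasure_withDensity hρmeas.ennreal_ofReal.aemeasurable
      fun x => ENNReal.ofReal_ne_zero_iff.2 (hρpos x)
  have : (volume.withDensity fun x => ENNReal.ofReal (ρ x)).IsNegInvariant :=
    isNegInvariant_withDensity fun x => by rw [hρsymm]
  exact ⟨fun x hx h hh => measure_Ici_Umap_add hx hh, fun b _ hΔ x hx h hh =>
    measure_Ici_add_le_of_Umap_sub_le cdf_zero_of_isNegInvariant.ge hh.le (hΔ h hh) hx⟩

/-- **Remark 1.5.** For a symmetric probability measure `μ` with a nowhere vanishing density
`ρ` one has `μ([U_μ(x+h),∞)) = e^{−h} μ([U_μ(x),∞))` for `x, h ≥ 0`; consequently, if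
`Δ_μ(h) ≤ (1/b) θ⁻¹(t₀² + h)`, then with `g(h) = (1/b) θ⁻¹(t₀² + h)` one has
`μ([x + g(h), ∞)) ≤ e^{−h} μ([x,∞))` for all `x ≥ 0`, `h > 0`. -/
theorem tail_condition_of_deltaCondition
    (θ : ℝ → ℝ) (t₀ : ℝ) (ht₀ : 0 < t₀)
    (hθnn : ∀ t ≥ (0:ℝ), 0 ≤ θ t)
    (hθconv : ConvexOn ℝ (Set.Ici 0) θ)
    (hθquad : ∀ t ∈ Set.Icc (0:ℝ) t₀, θ t = t ^ 2)
    (μ : Measure ℝ) [IsProbabilityMeasure μ]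
    (ρ : ℝ → ℝ) (hρmeas : Measurable ρ) (hρpos : ∀ x, 0 < ρ x)
    (hρsymm : ∀ x, ρ (-x) = ρ x)
    (hμρ : μ = volume.withDensity fun x => ENNReal.ofReal (ρ x)) :
    (∀ x ≥ (0:ℝ), ∀ h ≥ (0:ℝ),
      μ (Set.Ici (Umap μ (x + h))) =
        ENNReal.ofReal (Real.exp (-h)) * μ (Set.Ici (Umap μ x))) ∧
    (∀ b > (0:ℝ),
      (∀ h > (0:ℝ), ∀ x : ℝ,
        Umap μ (x + h) - Umap μ x ≤ (1 / b) * cinv θ (t₀ ^ 2 + h)) →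
      ∀ x ≥ (0:ℝ), ∀ h > (0:ℝ),
        μ (Set.Ici (x + (1 / b) * cinv θ (t₀ ^ 2 + h))) ≤
          ENNReal.ofReal (Real.exp (-h)) * μ (Set.Ici x)) :=
  tail_condition_of_deltaCondition_general θ t₀ μ ρ hρmeas hρpos hρsymm hμρ
end
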